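/- arXiv:1212.1406 — 6 statements merged into one kernel-verified Lean document; each statement's English description precedes it below -/
import Mathlib

section
/- A flow f on a network is maximal (has maximum net flow) if and only if there is no augmenting path (directed path from source to sink) in the residual graph G_f. -/
open Finset

/-- A network in the antisymmetric formulation: a capacity function on pairs of
vertices (zero on non-edges), with a source `s` (no edges into it) and a sink
`t` (no edges out of it). -/
structure ANetwork (V : Type) [Fintype V] [DecidableEq V] where
  c : V → V → ℝ
  s : V
  t : V
  hst : s ≠ t
  c_nonneg : ∀ u v, 0 ≤ c u v
  no_into_s : ∀ v, c v s = 0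
  no_out_t : ∀ v, c t v = 0

variable {V : Type} [Fintype V] [DecidableEq V]

/-- A flow in the antisymmetric formulation: an antisymmetric function
respecting capacities with conservation of flow at every vertex other than the
source and the sink. -/
def AFlow (N : ANetwork V) (f : V → V → ℝ) : Prop :=
  (∀ u v, f u v = - f v u) ∧ (∀ u v, f u v ≤ N.c u v) ∧
  ∀ u, u ≠ N.s → u ≠ N.t → ∑ v, f u v = 0

/-- The net flow: the total amount flowing out of the source. -/
def aValue (N : ANetwork V) (f : V → V → ℝ) : ℝ := ∑ v, f N.s v

/-- The residual capacity of a pair of vertices. -/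
def resCap (N : ANetwork V) (f : V → V → ℝ) (u v : V) : ℝ := N.c u v - f u v

/-- `(u, v)` is an edge of the residual graph `G_f` iff its residual capacity
is positive. -/
def ResEdge (N : ANetwork V) (f : V → V → ℝ) (u v : V) : Prop :=
  0 < resCap N f u v

/-- An augmenting path exists: a directed path from the source to the sink in
the residual graph. -/
def ExistsAugPath (N : ANetwork V) (f : V → V → ℝ) : Prop :=
  ∃ p : List V, List.Chain (ResEdge N f) N.s p ∧
    (N.s :: p).getLast (List.cons_ne_nil _ _) = N.t

/-!
If the residual graph has an `s`–`t` walk, pushing a small multiple of the unit flow along the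
walk (small enough that no residual capacity is exceeded, even on edges the walk repeats)
gives a flow of strictly larger value. Conversely, if `t` is not reachable from `s` in the
residual graph, the reachable set `S` is a cut every edge of which leaves `S` saturated by `f`;
since the value of any flow equals its net flow across a cut, no flow beats `f`.
-/

section PathFlow

variable {α : Type*} [DecidableEq α]

def edgeFlow (a b u v : α) : ℝ :=
  (if u = a ∧ v = b then 1 else 0) - if u = b ∧ v = a then 1 else 0

/-- The unit flow along the walk `a :: l`, counted with multiplicity. -/
def pathFlow : α → List α → α → α → ℝ
  | _, [] => 0
  | a, b :: l => edgeFlow a b + pathFlow b l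

@[simp]
theorem pathFlow_nil (a u v : α) : pathFlow a [] u v = 0 := rfl

@[simp]
theorem pathFlow_cons (a b : α) (l : List α) (u v : α) :
    pathFlow a (b :: l) u v = edgeFlow a b u v + pathFlow b l u v := rfl

theorem edgeFlow_swap (a b u v : α) : edgeFlow a b v u = -edgeFlow a b u v := by
  simp only [edgeFlow, neg_sub, and_comm]

theorem edgeFlow_le_one (a b u v : α) : edgeFlow a b u v ≤ 1 := by
  unfold edgeFlow
  split_ifs <;> norm_num

theorem eq_and_eq_of_edgeFlow_pos {a b u v : α} (h : 0 < edgeFlow a b u v) : u = a ∧ v = b := by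
  unfold edgeFlow at h
  split_ifs at h with hab <;> first | exact hab | norm_num at h

theorem sum_edgeFlow [Fintype α] (a b u : α) :
    ∑ v, edgeFlow a b u v = (if u = a then 1 else 0) - if u = b then 1 else 0 := by
  simp only [edgeFlow, sum_sub_distrib, ite_and]
  simp only [sum_ite_irrel, sum_ite_eq', mem_univ, if_true, sum_const_zero]

theorem pathFlow_swap (a : α) (l : List α) (u v : α) :
    pathFlow a l v u = -pathFlow a l u v := by
  induction l generalizing a with
  | nil => simp
  | cons b l ih =>
    rw [pathFlow_cons, pathFlow_cons, edgeFlow_swap, ih, neg_add]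

theorem pathFlow_le_length (a : α) (l : List α) (u v : α) : pathFlow a l u v ≤ l.length := by
  induction l generalizing a with
  | nil => simp
  | cons b l ih =>
    simp only [pathFlow_cons, List.length_cons, Nat.cast_add, Nat.cast_one]
    linarith [edgeFlow_le_one a b u v, ih b]

theorem rel_of_pathFlow_pos {R : α → α → Prop} {a : α} {l : List α} (hl : (a :: l).IsChain R)
    {u v : α} (h : 0 < pathFlow a l u v) : R u v := by
  induction l generalizing a with
  | nil => simp at h
  | cons b l ih =>
    rw [List.isChain_cons_cons] at hl
    rw [pathFlow_cons] at h
    by_cases hedge : 0 < edgeFlow a b u v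
    · obtain ⟨rfl, rfl⟩ := eq_and_eq_of_edgeFlow_pos hedge
      exact hl.1
    · exact ih hl.2 (by linarith)

theorem sum_pathFlow [Fintype α] (a : α) (l : List α) (u : α) :
    ∑ v, pathFlow a l u v =
      (if u = a then 1 else 0) - if u = (a :: l).getLast (List.cons_ne_nil a l) then 1 else 0 := by
  induction l generalizing a with
  | nil => rw [List.getLast_singleton, sub_self]; simp
  | cons b l ih =>
    simp only [pathFlow_cons, sum_add_distrib, sum_edgeFlow, ih, List.getLast_cons_cons]
    abel

end PathFlow

theorem exists_pos_le_of_pos {ι : Type*} [Fintype ι] (r : ι → ℝ) :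
    ∃ ε > 0, ∀ i, 0 < r i → ε ≤ r i := by
  by_cases h : (univ.filter fun i => 0 < r i).Nonempty
  · exact ⟨_, (lt_inf'_iff h).2 fun i hi => (mem_filter.1 hi).2,
      fun i hi => inf'_le _ (by simpa using hi)⟩
  · exact ⟨1, one_pos, fun i hi => absurd ⟨i, by simpa using hi⟩ h⟩

theorem existsAugPath_iff_reflTransGen (N : ANetwork V) (f : V → V → ℝ) :
    ExistsAugPath N f ↔ Relation.ReflTransGen (ResEdge N f) N.s N.t :=
  ⟨fun ⟨l, hl, hlast⟩ => List.relationReflTransGen_of_exists_isChain_cons l hl hlast,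
    List.exists_isChain_cons_of_relationReflTransGen⟩

namespace AFlow

variable {N : ANetwork V} {f g : V → V → ℝ}

theorem augment (hf : AFlow N f) {l : List V} (hl : (N.s :: l).IsChain (ResEdge N f))
    (hlast : (N.s :: l).getLast (List.cons_ne_nil _ _) = N.t) {δ : ℝ} (hδ : 0 ≤ δ)
    (hδle : ∀ u v, ResEdge N f u v → δ * l.length ≤ resCap N f u v) :
    AFlow N fun u v => f u v + δ * pathFlow N.s l u v := by
  obtain ⟨hanti, hcap, hcons⟩ := hf
  refine ⟨fun u v => ?_, fun u v => ?_, fun u hus hut => ?_⟩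
  · simp only
    rw [hanti u v, pathFlow_swap]
    ring
  · by_cases hpos : 0 < pathFlow N.s l u v
    · have hres := hδle u v (rel_of_pathFlow_pos hl hpos)
      have hlen := mul_le_mul_of_nonneg_left (pathFlow_le_length N.s l u v) hδ
      rw [resCap] at hres
      linarith
    · have hpush := mul_nonpos_of_nonneg_of_nonpos hδ (not_lt.1 hpos)
      linarith [hcap u v]
  · rw [sum_add_distrib, hcons u hus hut, ← mul_sum, sum_pathFlow, hlast, if_neg hus, if_neg hut]
    ring

theorem aValue_augment {l : List V} (hlast : (N.s :: l).getLast (List.cons_ne_nil _ _) = N.t)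
    (δ : ℝ) : aValue N (fun u v => f u v + δ * pathFlow N.s l u v) = aValue N f + δ := by
  rw [aValue, aValue, sum_add_distrib, ← mul_sum, sum_pathFlow, hlast, if_pos rfl,
    if_neg N.hst]
  ring

theorem exists_aValue_gt (hf : AFlow N f) (h : ExistsAugPath N f) :
    ∃ g, AFlow N g ∧ aValue N f < aValue N g := by
  obtain ⟨l, hl, hlast⟩ := h
  have hlen : (0 : ℝ) < l.length := by
    rcases l with _ | ⟨b, l⟩
    · exact absurd hlast N.hst
    · simp only [List.length_cons]
      positivity
  obtain ⟨ε, hε, hεle⟩ := exists_pos_le_of_pos fun e : V × V => resCap N f e.1 e.2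
  have hδ : 0 < ε / l.length := div_pos hε hlen
  refine ⟨_, hf.augment hl hlast hδ.le fun u v huv => ?_, ?_⟩
  · rw [div_mul_cancel₀ _ hlen.ne']
    exact hεle (u, v) huv
  · rw [aValue_augment hlast]
    linarith

theorem aValue_eq_sum_cut (hf : AFlow N f) {S : Finset V} (hs : N.s ∈ S) (ht : N.t ∉ S) :
    aValue N f = ∑ u ∈ S, ∑ v ∈ Sᶜ, f u v := by
  obtain ⟨hanti, -, hcons⟩ := hf
  have hout : ∑ u ∈ S, ∑ v, f u v = aValue N f :=
    sum_eq_single_of_mem N.s hs fun u hu hus => hcons u hus (ne_of_mem_of_not_mem hu ht)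
  have hinside : ∑ u ∈ S, ∑ v ∈ S, f u v = 0 := by
    have hneg : ∑ u ∈ S, ∑ v ∈ S, f u v = -∑ u ∈ S, ∑ v ∈ S, f u v := by
      conv_lhs => rw [sum_comm]
      simp only [← sum_neg_distrib]
      exact sum_congr rfl fun a _ => sum_congr rfl fun b _ => hanti b a
    linarith
  rw [← hout]
  simp only [← sum_add_sum_compl S, sum_add_distrib, hinside, zero_add]

theorem eq_cap_of_not_resEdge (hf : AFlow N f) {u v : V} (h : ¬ ResEdge N f u v) :
    f u v = N.c u v := by
  rw [ResEdge, resCap, not_lt, sub_nonpos] at h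
  exact le_antisymm (hf.2.1 u v) h

theorem aValue_le_of_not_existsAugPath (hf : AFlow N f) (hg : AFlow N g)
    (h : ¬ ExistsAugPath N f) : aValue N g ≤ aValue N f := by
  classical
  let S : Finset V := univ.filter (Relation.ReflTransGen (ResEdge N f) N.s)
  have hs : N.s ∈ S := mem_filter.2 ⟨mem_univ _, .refl⟩
  have ht : N.t ∉ S := by simpa [S, existsAugPath_iff_reflTransGen] using h
  rw [hg.aValue_eq_sum_cut hs ht, hf.aValue_eq_sum_cut hs ht]
  refine sum_le_sum fun u hu => sum_le_sum fun v hv => ?_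
  have hsat : ¬ ResEdge N f u v := fun huv =>
    (mem_compl.1 hv) (mem_filter.2 ⟨mem_univ v, (mem_filter.1 hu).2.tail huv⟩)
  exact (hg.2.1 u v).trans (hf.eq_cap_of_not_resEdge hsat).ge

end AFlow

/-- a flow is maximal iff there is no augmenting path in the
residual graph. -/
theorem max_iff_no_augmenting_path (N : ANetwork V) (f : V → V → ℝ)
    (hf : AFlow N f) :
    (∀ g, AFlow N g → aValue N g ≤ aValue N f) ↔ ¬ ExistsAugPath N f := by
  constructor
  · intro hmax haug
    obtain ⟨g, hg, hlt⟩ := hf.exists_aValue_gt haug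
    exact (hmax g hg).not_gt hlt
  · intro h g hg
    exact hf.aValue_le_of_not_existsAugPath hg h
end

section
/- Max-flow min-cut theorem: the maximum net flow over all flows on a network equals the minimum capacity over all cuts. -/
open Finset

/-- A network: a finite simple directed graph with capacities, a source `s`
(no incoming edges) and a sink `t` (no outgoing edges). -/
structure Network (V : Type) [Fintype V] [DecidableEq V] where
  E : Finset (V × V)
  c : V × V → ℝ
  s : V
  t : V
  hst : s ≠ t
  c_nonneg : ∀ e, 0 ≤ c e
  no_loops : ∀ v, (v, v) ∉ E
  no_into_s : ∀ v, (v, s) ∉ E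
  no_out_t : ∀ v, (t, v) ∉ E

variable {V : Type} [Fintype V] [DecidableEq V]

/-- A flow: nonnegative, supported on the edges, respecting capacities, and
conserving flow at every vertex other than the source and the sink. -/
def IsFlow (N : Network V) (f : V × V → ℝ) : Prop :=
  (∀ e, 0 ≤ f e) ∧ (∀ e, f e ≤ N.c e) ∧ (∀ e, e ∉ N.E → f e = 0) ∧
  ∀ v, v ≠ N.s → v ≠ N.t → ∑ w, f (v, w) = ∑ w, f (w, v)

/-- The net flow: the total amount of flow leaving the source. -/
def flowValue (N : Network V) (f : V × V → ℝ) : ℝ := ∑ w, f (N.s, w)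

/-- A cut: a set of vertices containing the source but not the sink
(together with its complement it partitions the vertices). -/
def IsCut (N : Network V) (S : Finset V) : Prop := N.s ∈ S ∧ N.t ∉ S

/-- The capacity of a cut: the sum of the capacities of the edges directed
from `S` to its complement. -/
def cutCapacity (N : Network V) (S : Finset V) : ℝ :=
  ∑ e ∈ N.E, if e.1 ∈ S ∧ e.2 ∉ S then N.c e else 0

/-! ### Auxiliary machinery for the proof -/

/-- The divergence (net outflow) of `f` at a vertex. -/
noncomputable def div' (f : V × V → ℝ) (u : V) : ℝ :=
  (∑ w, f (u, w)) - ∑ w, f (w, u)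

/-- The residual relation: an augmenting step from `u` to `v`. -/
def Res (N : Network V) (f : V × V → ℝ) (u v : V) : Prop :=
  ((u, v) ∈ N.E ∧ f (u, v) < N.c (u, v)) ∨ ((v, u) ∈ N.E ∧ 0 < f (v, u))

lemma sum_single_fst (a b : V) (δ : ℝ) (w : V) :
    ∑ x, (if (w, x) = (a, b) then δ else 0) = if w = a then δ else 0 := by
  by_cases hw : w = a
  · subst hw; simp [Prod.ext_iff]
  · simp [Prod.ext_iff, hw]

lemma sum_single_snd (a b : V) (δ : ℝ) (w : V) :
    ∑ x, (if (x, w) = (a, b) then δ else 0) = if w = b then δ else 0 := by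
  by_cases hw : w = b
  · subst hw; simp [Prod.ext_iff]
  · simp [Prod.ext_iff, hw]

/-- Augmentation lemma: if `v` is reachable from the source in the residual
graph of a flow `f`, then for all small `δ > 0` we can modify `f` into a
capacity-respecting function whose divergence gains `δ` at the source and
loses `δ` at `v`. -/
lemma aug (N : Network V) (f : V × V → ℝ) (hf : IsFlow N f) (v : V)
    (h : Relation.ReflTransGen (Res N f) N.s v) :
    ∃ ε > (0:ℝ), ∃ K > (0:ℝ), ∀ δ : ℝ, 0 < δ → δ ≤ ε → ∃ g : V × V → ℝ,
      (∀ e, 0 ≤ g e) ∧ (∀ e, g e ≤ N.c e) ∧ (∀ e, e ∉ N.E → g e = 0) ∧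
      (∀ e, |g e - f e| ≤ K * δ) ∧
      (∀ u, div' g u =
        div' f u + (if u = N.s then δ else 0) - (if u = v then δ else 0)) := by
  induction h with
  | refl =>
    refine ⟨1, one_pos, 1, one_pos, fun δ hδ _ =>
      ⟨f, hf.1, hf.2.1, hf.2.2.1, ?_, ?_⟩⟩
    · intro e; simpa using hδ.le
    · intro u; by_cases hu : u = N.s <;> simp [hu]
  | @tail b c _ hbc ih =>
    obtain ⟨ε, hε, K, hK, hfam⟩ := ih
    rcases hbc with ⟨he, hlt⟩ | ⟨he, hpos⟩
    · -- forward residual edge (b, c)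
      have hσ : 0 < N.c (b, c) - f (b, c) := sub_pos.mpr hlt
      refine ⟨min ε ((N.c (b, c) - f (b, c)) / (K + 1)),
        lt_min hε (by positivity), K + 1, by linarith, fun δ hδ hδ' => ?_⟩
      have hδε : δ ≤ ε := le_trans hδ' (min_le_left _ _)
      have hδσ : (K + 1) * δ ≤ N.c (b, c) - f (b, c) := by
        have h2 := le_trans hδ' (min_le_right _ _)
        rw [le_div_iff₀ (by linarith)] at h2; linarith
      obtain ⟨g, hg0, hgc, hgsupp, habs, hdiv⟩ := hfam δ hδ hδε
      refine ⟨fun e => g e + (if e = (b, c) then δ else 0), ?_, ?_, ?_, ?_, ?_⟩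
      · intro e; have := hg0 e; dsimp only; split_ifs <;> linarith
      · intro e
        by_cases hcase : e = (b, c)
        · subst hcase
          have h1 := abs_le.mp (habs (b, c))
          dsimp only; rw [if_pos rfl]
          linarith [h1.2]
        · simp only [if_neg hcase, add_zero]; exact hgc e
      · intro e he'
        have hne : e ≠ (b, c) := fun h => he' (h ▸ he)
        simp only [if_neg hne, add_zero]; exact hgsupp e he'
      · intro e
        have h1 := abs_le.mp (habs e)
        rw [abs_le]; dsimp only; split_ifs <;> constructor <;> nlinarith
      · intro u
        have hout : (∑ x, (g (u, x) + (if (u, x) = (b, c) then δ else 0)))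
            = (∑ x, g (u, x)) + (if u = b then δ else 0) := by
          rw [Finset.sum_add_distrib, sum_single_fst]
        have hin : (∑ x, (g (x, u) + (if (x, u) = (b, c) then δ else 0)))
            = (∑ x, g (x, u)) + (if u = c then δ else 0) := by
          rw [Finset.sum_add_distrib, sum_single_snd]
        have hd := hdiv u
        simp only [div'] at hd ⊢
        rw [hout, hin]
        linarith [hd]
    · -- backward residual edge (c, b)
      have hσ : 0 < f (c, b) := hpos
      refine ⟨min ε (f (c, b) / (K + 1)),
        lt_min hε (by positivity), K + 1, by linarith, fun δ hδ hδ' => ?_⟩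
      have hδε : δ ≤ ε := le_trans hδ' (min_le_left _ _)
      have hδσ : (K + 1) * δ ≤ f (c, b) := by
        have h2 := le_trans hδ' (min_le_right _ _)
        rw [le_div_iff₀ (by linarith)] at h2; linarith
      obtain ⟨g, hg0, hgc, hgsupp, habs, hdiv⟩ := hfam δ hδ hδε
      refine ⟨fun e => g e - (if e = (c, b) then δ else 0), ?_, ?_, ?_, ?_, ?_⟩
      · intro e
        by_cases hcase : e = (c, b)
        · subst hcase
          have h1 := abs_le.mp (habs (c, b))
          dsimp only; rw [if_pos rfl]
          linarith [h1.1]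
        · simp only [if_neg hcase, sub_zero]; exact hg0 e
      · intro e; have := hgc e; dsimp only; split_ifs <;> linarith
      · intro e he'
        have hne : e ≠ (c, b) := fun h => he' (h ▸ he)
        simp only [if_neg hne, sub_zero]; exact hgsupp e he'
      · intro e
        have h1 := abs_le.mp (habs e)
        rw [abs_le]; dsimp only; split_ifs <;> constructor <;> nlinarith
      · intro u
        have hout : (∑ x, (g (u, x) - (if (u, x) = (c, b) then δ else 0)))
            = (∑ x, g (u, x)) - (if u = c then δ else 0) := by
          rw [Finset.sum_sub_distrib, sum_single_fst]
        have hin : (∑ x, (g (x, u) - (if (x, u) = (c, b) then δ else 0)))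
            = (∑ x, g (x, u)) - (if u = b then δ else 0) := by
          rw [Finset.sum_sub_distrib, sum_single_snd]
        have hd := hdiv u
        simp only [div'] at hd ⊢
        rw [hout, hin]
        linarith [hd]

/-- The flow across any cut equals the flow value. -/
lemma flow_across (N : Network V) (f : V × V → ℝ)
    (hsupp : ∀ e, e ∉ N.E → f e = 0)
    (hcons : ∀ v, v ≠ N.s → v ≠ N.t → ∑ w, f (v, w) = ∑ w, f (w, v))
    (S : Finset V) (hS : IsCut N S) :
    flowValue N f =
      (∑ u ∈ S, ∑ w ∈ Sᶜ, f (u, w)) - ∑ u ∈ S, ∑ w ∈ Sᶜ, f (w, u) := by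
  have hin : ∀ w, f (w, N.s) = 0 := fun w => hsupp _ (N.no_into_s w)
  have h1 : ∑ u ∈ S, ((∑ w, f (u, w)) - ∑ w, f (w, u)) = flowValue N f := by
    rw [Finset.sum_eq_single N.s]
    · simp [flowValue, hin]
    · intro u hu hus
      have hut : u ≠ N.t := fun h => hS.2 (h ▸ hu)
      rw [hcons u hus hut]; ring
    · intro h; exact absurd hS.1 h
  have A1 : ∑ u ∈ S, ∑ w, f (u, w)
      = (∑ u ∈ S, ∑ w ∈ S, f (u, w)) + ∑ u ∈ S, ∑ w ∈ Sᶜ, f (u, w) := by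
    rw [← Finset.sum_add_distrib]
    exact Finset.sum_congr rfl fun u _ =>
      (Finset.sum_add_sum_compl S fun w => f (u, w)).symm
  have A2 : ∑ u ∈ S, ∑ w, f (w, u)
      = (∑ u ∈ S, ∑ w ∈ S, f (w, u)) + ∑ u ∈ S, ∑ w ∈ Sᶜ, f (w, u) := by
    rw [← Finset.sum_add_distrib]
    exact Finset.sum_congr rfl fun u _ =>
      (Finset.sum_add_sum_compl S fun w => f (w, u)).symm
  have A3 : ∑ u ∈ S, ∑ w ∈ S, f (u, w) = ∑ u ∈ S, ∑ w ∈ S, f (w, u) :=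
    Finset.sum_comm
  rw [← h1, Finset.sum_sub_distrib]
  linarith [A1, A2, A3]

/-- The cut capacity written as a double sum over the cut and its complement. -/
lemma cut_eq_cross (N : Network V) (S : Finset V) :
    cutCapacity N S
      = ∑ u ∈ S, ∑ w ∈ Sᶜ, (if (u, w) ∈ N.E then N.c (u, w) else 0) := by
  have h1 : (∑ u ∈ S, ∑ w ∈ Sᶜ, (if (u, w) ∈ N.E then N.c (u, w) else 0))
      = ∑ e ∈ S ×ˢ Sᶜ, (if e ∈ N.E then N.c e else 0) := by
    rw [Finset.sum_product]
  rw [h1, Finset.sum_ite_mem, cutCapacity, ← Finset.sum_filter]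
  congr 1
  ext ⟨a, b⟩
  simp only [Finset.mem_inter, Finset.mem_product, Finset.mem_compl,
    Finset.mem_filter]
  tauto

/-- Weak duality: any flow value is at most any cut capacity. -/
lemma flow_le_cut (N : Network V) (f : V × V → ℝ) (hf : IsFlow N f)
    (S : Finset V) (hS : IsCut N S) : flowValue N f ≤ cutCapacity N S := by
  obtain ⟨h0, hc, hsupp, hcons⟩ := hf
  rw [flow_across N f hsupp hcons S hS, cut_eq_cross]
  have hB : (0:ℝ) ≤ ∑ u ∈ S, ∑ w ∈ Sᶜ, f (w, u) :=
    Finset.sum_nonneg fun u _ => Finset.sum_nonneg fun w _ => h0 _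
  have hA : ∑ u ∈ S, ∑ w ∈ Sᶜ, f (u, w)
      ≤ ∑ u ∈ S, ∑ w ∈ Sᶜ, (if (u, w) ∈ N.E then N.c (u, w) else 0) := by
    refine Finset.sum_le_sum fun u _ => Finset.sum_le_sum fun w _ => ?_
    by_cases he : (u, w) ∈ N.E
    · rw [if_pos he]; exact hc _
    · rw [if_neg he, hsupp _ he]
  linarith

lemma isClosed_isFlow (N : Network V) : IsClosed {f : V × V → ℝ | IsFlow N f} := by
  have h1 : IsClosed {f : V × V → ℝ | ∀ e, 0 ≤ f e} := by
    rw [Set.setOf_forall]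
    exact isClosed_iInter fun e =>
      isClosed_le continuous_const (continuous_apply e)
  have h2 : IsClosed {f : V × V → ℝ | ∀ e, f e ≤ N.c e} := by
    rw [Set.setOf_forall]
    exact isClosed_iInter fun e =>
      isClosed_le (continuous_apply e) continuous_const
  have h3 : IsClosed {f : V × V → ℝ | ∀ e, e ∉ N.E → f e = 0} := by
    rw [Set.setOf_forall]
    refine isClosed_iInter fun e => ?_
    by_cases he : e ∈ N.E
    · simp [he]
    · simp only [he, not_false_iff, forall_true_left]
      exact isClosed_eq (continuous_apply e) continuous_const
  have h4 : IsClosed {f : V × V → ℝ |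
      ∀ u, u ≠ N.s → u ≠ N.t → ∑ w, f (u, w) = ∑ w, f (w, u)} := by
    rw [Set.setOf_forall]
    refine isClosed_iInter fun u => ?_
    by_cases hs : u = N.s
    · simp [hs]
    by_cases ht : u = N.t
    · simp [ht]
    · have : {f : V × V → ℝ | u ≠ N.s → u ≠ N.t → ∑ w, f (u, w) = ∑ w, f (w, u)}
          = {f : V × V → ℝ | ∑ w, f (u, w) = ∑ w, f (w, u)} := by
        ext f; simp [hs, ht]
      rw [this]
      exact isClosed_eq
        (continuous_finset_sum _ fun w _ => continuous_apply (u, w))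
        (continuous_finset_sum _ fun w _ => continuous_apply (w, u))
  have heq : {f : V × V → ℝ | IsFlow N f}
      = {f : V × V → ℝ | ∀ e, 0 ≤ f e} ∩ ({f | ∀ e, f e ≤ N.c e} ∩
        ({f | ∀ e, e ∉ N.E → f e = 0} ∩
         {f | ∀ u, u ≠ N.s → u ≠ N.t → ∑ w, f (u, w) = ∑ w, f (w, u)})) := by
    ext f
    simp only [Set.mem_setOf_eq, Set.mem_inter_iff, IsFlow]
  rw [heq]
  exact h1.inter (h2.inter (h3.inter h4))

/-- A flow of maximum value exists (compactness). -/
lemma exists_maxflow (N : Network V) :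
    ∃ f, IsFlow N f ∧ ∀ g, IsFlow N g → flowValue N g ≤ flowValue N f := by
  have hzero : IsFlow N (fun _ => 0) :=
    ⟨fun _ => le_refl 0, fun e => N.c_nonneg e, fun _ _ => rfl, fun _ _ _ => rfl⟩
  have hne : {f : V × V → ℝ | IsFlow N f}.Nonempty := ⟨fun _ => 0, hzero⟩
  have hbox : IsCompact (Set.univ.pi fun e => Set.Icc (0:ℝ) (N.c e)) :=
    isCompact_univ_pi fun e => isCompact_Icc
  have hsub : {f : V × V → ℝ | IsFlow N f}
      ⊆ Set.univ.pi fun e => Set.Icc (0:ℝ) (N.c e) := by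
    intro f hf e _
    exact ⟨hf.1 e, hf.2.1 e⟩
  have hK : IsCompact {f : V × V → ℝ | IsFlow N f} :=
    hbox.of_isClosed_subset (isClosed_isFlow N) hsub
  have hcont : ContinuousOn (flowValue N) {f : V × V → ℝ | IsFlow N f} := by
    have : Continuous (flowValue N) :=
      continuous_finset_sum _ fun w _ => continuous_apply (N.s, w)
    exact this.continuousOn
  obtain ⟨f, hfmem, hmax⟩ := hK.exists_isMaxOn hne hcont
  exact ⟨f, hfmem, fun g hg => hmax hg⟩

/-- max-flow min-cut: there are a flow of maximum net flow and a
cut of minimum capacity, and the maximum net flow equals the minimum cut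
capacity. -/
theorem maxflow_eq_mincut (N : Network V) :
    ∃ (f : V × V → ℝ) (S : Finset V),
      IsFlow N f ∧ IsCut N S ∧
      (∀ g : V × V → ℝ, IsFlow N g → flowValue N g ≤ flowValue N f) ∧
      (∀ S' : Finset V, IsCut N S' → cutCapacity N S ≤ cutCapacity N S') ∧
      flowValue N f = cutCapacity N S := by
  classical
  obtain ⟨f, hf, hmax⟩ := exists_maxflow N
  set S : Finset V :=
    Finset.univ.filter (fun v => Relation.ReflTransGen (Res N f) N.s v)
    with hSdef
  have hmemS : ∀ v, v ∈ S ↔ Relation.ReflTransGen (Res N f) N.s v := by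
    intro v; simp [hSdef]
  have hsS : N.s ∈ S := (hmemS _).2 Relation.ReflTransGen.refl
  have htS : N.t ∉ S := by
    intro ht
    obtain ⟨ε, hε, K, _, hfam⟩ := aug N f hf N.t ((hmemS _).1 ht)
    obtain ⟨g, hg0, hgc, hgsupp, _, hdiv⟩ := hfam ε hε le_rfl
    have hgflow : IsFlow N g := by
      refine ⟨hg0, hgc, hgsupp, fun u hus hut => ?_⟩
      have hd := hdiv u
      rw [if_neg hus, if_neg hut] at hd
      have hdf : div' f u = 0 := by
        rw [div', hf.2.2.2 u hus hut, sub_self]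
      have : div' g u = 0 := by rw [hd, hdf]; ring
      rw [div'] at this
      linarith
    have hval : flowValue N g = flowValue N f + ε := by
      have hins : ∀ w, g (w, N.s) = 0 := fun w => hgsupp _ (N.no_into_s w)
      have hinf : ∀ w, f (w, N.s) = 0 := fun w => hf.2.2.1 _ (N.no_into_s w)
      have hd := hdiv N.s
      rw [if_pos rfl, if_neg N.hst] at hd
      rw [div', div'] at hd
      have h1 : ∑ w, g (w, N.s) = 0 := Finset.sum_eq_zero fun w _ => hins w
      have h2 : ∑ w, f (w, N.s) = 0 := Finset.sum_eq_zero fun w _ => hinf w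
      rw [h1, h2] at hd
      rw [flowValue, flowValue]
      linarith
    have := hmax g hgflow
    rw [hval] at this
    linarith
  have hcut : IsCut N S := ⟨hsS, htS⟩
  have hAeq : ∀ u ∈ S, ∀ w ∈ Sᶜ,
      f (u, w) = (if (u, w) ∈ N.E then N.c (u, w) else 0) := by
    intro u hu w hw
    rw [Finset.mem_compl] at hw
    by_cases he : (u, w) ∈ N.E
    · rw [if_pos he]
      by_contra hne
      have hlt : f (u, w) < N.c (u, w) := lt_of_le_of_ne (hf.2.1 _) hne
      exact hw ((hmemS w).2
        (Relation.ReflTransGen.tail ((hmemS u).1 hu) (Or.inl ⟨he, hlt⟩)))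
    · rw [if_neg he]; exact hf.2.2.1 _ he
  have hBeq : ∀ u ∈ S, ∀ w ∈ Sᶜ, f (w, u) = 0 := by
    intro u hu w hw
    rw [Finset.mem_compl] at hw
    by_cases he : (w, u) ∈ N.E
    · by_contra hne
      have hpos : 0 < f (w, u) := lt_of_le_of_ne (hf.1 _) (Ne.symm hne)
      exact hw ((hmemS w).2
        (Relation.ReflTransGen.tail ((hmemS u).1 hu) (Or.inr ⟨he, hpos⟩)))
    · exact hf.2.2.1 _ he
  have heq : flowValue N f = cutCapacity N S := by
    rw [flow_across N f hf.2.2.1 hf.2.2.2 S hcut, cut_eq_cross]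
    have hA : ∑ u ∈ S, ∑ w ∈ Sᶜ, f (u, w)
        = ∑ u ∈ S, ∑ w ∈ Sᶜ, (if (u, w) ∈ N.E then N.c (u, w) else 0) :=
      Finset.sum_congr rfl fun u hu =>
        Finset.sum_congr rfl fun w hw => hAeq u hu w hw
    have hB : ∑ u ∈ S, ∑ w ∈ Sᶜ, f (w, u) = 0 :=
      Finset.sum_eq_zero fun u hu =>
        Finset.sum_eq_zero fun w hw => hBeq u hu w hw
    rw [hA, hB, sub_zero]
  refine ⟨f, S, hf, hcut, fun g hg => hmax g hg, fun S' hS' => ?_, heq⟩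
  rw [← heq]
  exact flow_le_cut N f hf S' hS'
end

section
/- If f is a preflow on a network and d is a valid labeling for f, then the sink t is not reachable from the source s in the residual graph G_f. -/
/-! Along a residual path a valid labeling drops by at most one per edge, so going from
`d s = n` down to `d t = 0` it passes through every value `n, n - 1, …, 0`. These are
`n + 1` distinct labels, which `n` vertices cannot carry. -/

open Finset

variable {V : Type} [Fintype V] [DecidableEq V]

/-- A preflow: antisymmetric, respecting capacities, with nonnegative excess
at every vertex other than the source. -/
def IsPreflow (N : ANetwork V) (f : V → V → ℝ) : Prop :=
  (∀ u v, f u v = - f v u) ∧ (∀ u v, f u v ≤ N.c u v) ∧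
  ∀ x, x ≠ N.s → 0 ≤ ∑ v, f x v

/-- A valid labeling for a preflow `f`: `d s = n`, `d t = 0` and
`d v ≤ d w + 1` for every residual edge `(v, w)`. -/
def IsValidLabeling (N : ANetwork V) (f : V → V → ℝ) (d : V → ℕ∞) : Prop :=
  d N.s = (Fintype.card V : ℕ∞) ∧ d N.t = 0 ∧
  ∀ v w, ResEdge N f v w → d v ≤ d w + 1

theorem List.IsChain.exists_mem_apply_eq_of_le {α : Type*} {r : α → α → Prop} {d : α → ℕ∞}
    (hd : ∀ v w, r v w → d v ≤ d w + 1) {a : α} {l : List α} (hl : (a :: l).IsChain r)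
    {k : ℕ∞} (hlast : d ((a :: l).getLast (List.cons_ne_nil a l)) ≤ k) (hhead : k ≤ d a) :
    ∃ x ∈ a :: l, d x = k := by
  induction l generalizing a with
  | nil => exact ⟨a, List.mem_singleton_self a, le_antisymm hlast hhead⟩
  | cons b l ih =>
    rcases hhead.eq_or_lt with rfl | hlt
    · exact ⟨a, List.mem_cons_self, rfl⟩
    rw [List.isChain_cons_cons] at hl
    have hkb : k ≤ d b := by
      have := (ENat.add_one_le_iff hlt.ne_top).2 hlt
      exact (ENat.add_le_add_iff_right ENat.one_ne_top).1 (this.trans (hd a b hl.1))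
    obtain ⟨x, hx, rfl⟩ := ih hl.2 hlast hkb
    exact ⟨x, List.mem_cons_of_mem a hx, rfl⟩

theorem lt_card_of_forall_le_exists_apply_eq {α : Type*} [Fintype α] {d : α → ℕ∞} {n : ℕ}
    (h : ∀ k ≤ n, ∃ v, d v = k) : n < Fintype.card α := by
  choose g hg using h
  have hinj : Function.Injective fun i : Fin (n + 1) => g i (Nat.lt_succ_iff.1 i.2) := by
    intro i j hij
    have := congrArg d hij
    simp only [hg, Nat.cast_inj] at this
    exact Fin.ext this
  simpa using Fintype.card_le_of_injective _ hinj

theorem sink_not_reachable_general (N : ANetwork V) (f : V → V → ℝ) (d : V → ℕ∞)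
    (hd : IsValidLabeling N f d) :
    ¬ ∃ p : List V, List.Chain (ResEdge N f) N.s p ∧
        (N.s :: p).getLast (List.cons_ne_nil _ _) = N.t := by
  rintro ⟨p, hpath, hlast⟩
  obtain ⟨hds, hdt, hdl⟩ := hd
  have hall : ∀ k ≤ Fintype.card V, ∃ v, d v = k := fun k hk => by
    obtain ⟨v, -, hv⟩ := List.IsChain.exists_mem_apply_eq_of_le (k := k) hdl hpath
      (by rw [hlast, hdt]; exact zero_le) (by rw [hds]; exact_mod_cast hk)
    exact ⟨v, hv⟩
  exact (lt_card_of_forall_le_exists_apply_eq hall).false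

/-- if `f` is a preflow and `d` a valid labeling for `f`, then the
sink is not reachable from the source in the residual graph. -/
theorem sink_not_reachable (N : ANetwork V) (f : V → V → ℝ) (d : V → ℕ∞)
    (hf : IsPreflow N f) (hd : IsValidLabeling N f d) :
    ¬ ∃ p : List V, List.Chain (ResEdge N f) N.s p ∧
        (N.s :: p).getLast (List.cons_ne_nil _ _) = N.t :=
  sink_not_reachable_general N f d hd
end

section
/- If the push-relabel algorithm terminates with a preflow f having zero excess at all vertices other than s and t, and d is a valid labeling for f with finite labels, then f is a flow of maximum net flow. -/
open Finset

variable {V : Type} [Fintype V] [DecidableEq V]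

/-- if at termination of push–relabel the preflow `f` has zero
excess at every vertex other than `s` and `t`, and `d` is a valid labeling for
`f` with finite labels, then `f` is a flow of maximum net flow. -/
theorem push_relabel_correct (N : ANetwork V) (f : V → V → ℝ) (d : V → ℕ∞)
    (hf : IsPreflow N f)
    (hzero : ∀ x, x ≠ N.s → x ≠ N.t → ∑ v, f x v = 0)
    (hd : IsValidLabeling N f d) (hfin : ∀ v, d v ≠ ⊤) :
    AFlow N f ∧ ∀ g, AFlow N g → aValue N g ≤ aValue N f := by
  obtain ⟨hanti, hcap, _⟩ := hf
  obtain ⟨hds, hdt, hdres⟩ := hd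
  refine ⟨⟨hanti, hcap, hzero⟩, ?_⟩
  set n := Fintype.card V with hn
  have hn2 : 2 ≤ n := Fintype.one_lt_card_iff_nontrivial.mpr ⟨⟨N.s, N.t, N.hst⟩⟩
  -- finite labels as naturals
  set e : V → ℕ := fun v => (d v).toNat with he
  have hde : ∀ v, d v = (e v : ℕ∞) := fun v => (ENat.coe_toNat (hfin v)).symm
  have hes : e N.s = n := by
    have := hds; rw [hde N.s] at this; exact_mod_cast this
  have het : e N.t = 0 := by
    have := hdt; rw [hde N.t] at this; exact_mod_cast this
  have heres : ∀ v w, ResEdge N f v w → e v ≤ e w + 1 := by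
    intro v w h
    have := hdres v w h
    rw [hde v, hde w] at this
    exact_mod_cast this
  -- there is a gap label k
  have hgap : ∃ k, 1 ≤ k ∧ k ≤ n - 1 ∧ ∀ v, e v ≠ k := by
    by_contra h
    push_neg at h
    have hsub : (Finset.Icc 1 (n - 1)) ⊆ ((Finset.univ.erase N.t).erase N.s).image e := by
      intro k hk
      rw [Finset.mem_Icc] at hk
      obtain ⟨v, hv⟩ := h k hk.1 hk.2
      refine Finset.mem_image.mpr ⟨v, ?_, hv⟩
      rw [Finset.mem_erase, Finset.mem_erase]
      refine ⟨?_, ?_, Finset.mem_univ v⟩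
      · rintro rfl; rw [hes] at hv; omega
      · rintro rfl; rw [het] at hv; omega
    have h1 := Finset.card_le_card hsub
    rw [Nat.card_Icc] at h1
    have h2 := Finset.card_image_le (s := (Finset.univ.erase N.t).erase N.s) (f := e)
    have h3 : ((Finset.univ.erase N.t).erase N.s).card = n - 2 := by
      rw [Finset.card_erase_of_mem, Finset.card_erase_of_mem (Finset.mem_univ _),
        Finset.card_univ]
      · omega
      · exact Finset.mem_erase.mpr ⟨N.hst, Finset.mem_univ _⟩
    omega
  obtain ⟨k, hk1, hkn, hknot⟩ := hgap
  -- the cut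
  set S : Finset V := Finset.univ.filter (fun v => k < e v) with hS
  have hsS : N.s ∈ S := by
    rw [hS, Finset.mem_filter]; exact ⟨Finset.mem_univ _, by omega⟩
  have htS : N.t ∉ S := by
    simp [hS, het]
  -- the cut is saturated by f
  have hsat : ∀ u ∈ S, ∀ v ∉ S, f u v = N.c u v := by
    intro u hu v hv
    by_contra hne
    have hres : ResEdge N f u v := by
      have := hcap u v
      unfold ResEdge resCap
      rcases lt_or_eq_of_le this with h | h
      · linarith
      · exact absurd h hne
    have h1 := heres u v hres
    rw [hS, Finset.mem_filter] at hu hv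
    simp only [Finset.mem_univ, true_and] at hu hv
    have hvk : e v ≠ k := hknot v
    omega
  -- the value of any flow equals its net flow across the cut
  have hcut : ∀ g : V → V → ℝ, AFlow N g →
      aValue N g = ∑ u ∈ S, ∑ v ∈ Sᶜ, g u v := by
    intro g ⟨ganti, _, gcons⟩
    have h1 : ∑ u ∈ S, ∑ v, g u v = aValue N g := by
      rw [Finset.sum_eq_single_of_mem N.s hsS]
      · rfl
      · intro u hu hne
        exact gcons u hne (by rintro rfl; exact htS hu)
    have h2 : ∑ u ∈ S, ∑ v ∈ S, g u v = 0 := by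
      have hsym : ∑ u ∈ S, ∑ v ∈ S, g u v = -∑ u ∈ S, ∑ v ∈ S, g u v := by
        nth_rewrite 1 [Finset.sum_comm]
        rw [← Finset.sum_neg_distrib]
        apply Finset.sum_congr rfl
        intro v _
        rw [← Finset.sum_neg_distrib]
        apply Finset.sum_congr rfl
        intro u _
        rw [ganti u v]
      linarith
    have h3 : ∀ u, (∑ v ∈ S, g u v) + ∑ v ∈ Sᶜ, g u v = ∑ v, g u v :=
      fun u => Finset.sum_add_sum_compl S _
    calc aValue N g = ∑ u ∈ S, ∑ v, g u v := h1.symm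
      _ = ∑ u ∈ S, ((∑ v ∈ S, g u v) + ∑ v ∈ Sᶜ, g u v) := by
          exact Finset.sum_congr rfl fun u _ => (h3 u).symm
      _ = (∑ u ∈ S, ∑ v ∈ S, g u v) + ∑ u ∈ S, ∑ v ∈ Sᶜ, g u v := Finset.sum_add_distrib
      _ = ∑ u ∈ S, ∑ v ∈ Sᶜ, g u v := by rw [h2]; ring
  intro g hg
  have hgcap := hg.2.1
  rw [hcut g hg, hcut f ⟨hanti, hcap, hzero⟩]
  apply Finset.sum_le_sum
  intro u hu
  apply Finset.sum_le_sum
  intro v hv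
  rw [hsat u hu v (Finset.mem_compl.mp hv)]
  exact hgcap u v
end

section
/- Flow decomposition theorem: every flow f on a network with m edges can be written as a sum of at most m flows, each of which is either an s–t path-flow or a cycle-flow. -/
open Finset

variable {V : Type} [Fintype V] [DecidableEq V]

/-- An `s`–`t` path-flow: a flow whose support (the set of edges carrying a
strictly positive amount of flow) is the edge set of a directed path from the
source to the sink. -/
def IsPathFlow (N : Network V) (g : V × V → ℝ) : Prop :=
  IsFlow N g ∧ ∃ p : List V, p.Nodup ∧ p.head? = some N.s ∧ p.getLast? = some N.t ∧
    {e : V × V | 0 < g e} = {e : V × V | e ∈ p.zip p.tail}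

/-- A cycle-flow: a flow whose support is the edge set of a directed cycle. -/
def IsCycleFlow (N : Network V) (g : V × V → ℝ) : Prop :=
  IsFlow N g ∧ ∃ p : List V, p.Nodup ∧ p ≠ [] ∧
    {e : V × V | 0 < g e} = {e : V × V | e ∈ p.zip (p.rotate 1)}

/-!
If `f ≠ 0`, follow positive edges forwards from a positive edge (conservation supplies an
outgoing edge at every vertex except `t`) and backwards (an incoming edge everywhere except
`s`). In a finite graph this produces either a simple cycle or a simple `s`–`t` path of
positive edges. Subtracting the smallest value of `f` along it, spread uniformly over its
edges, leaves a flow whose support has lost at least one edge; induction on the size of the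
support gives at most `|supp f| ≤ m` summands.
-/

namespace List

variable {α : Type*}

theorem isChain_iff_forall_mem_zip_tail {R : α → α → Prop} :
    ∀ {l : List α}, l.IsChain R ↔ ∀ e ∈ l.zip l.tail, R e.1 e.2
  | [] | [_] => by simp
  | a :: b :: l => by
    rw [isChain_cons_cons, isChain_iff_forall_mem_zip_tail]
    simp

theorem map_fst_zip_tail : ∀ l : List α, (l.zip l.tail).map Prod.fst = l.dropLast
  | [] | [_] => rfl
  | a :: b :: l => by
    rw [tail_cons, zip_cons_cons, map_cons, dropLast_cons_cons, ← map_fst_zip_tail (b :: l)]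
    rfl

theorem map_snd_zip_tail (l : List α) : (l.zip l.tail).map Prod.snd = l.tail :=
  map_snd_zip (by simp)

theorem nodup_zip_tail {l : List α} (h : l.dropLast.Nodup) : (l.zip l.tail).Nodup :=
  .of_map Prod.fst (by rwa [map_fst_zip_tail])

theorem count_dropLast_eq_count_tail [BEq α] [LawfulBEq α] {l : List α} {a : α}
    (hhead : l.head? ≠ some a) (hlast : l.getLast? ≠ some a) :
    l.dropLast.count a = l.tail.count a := by
  rw [← count_reverse, ← tail_reverse, count_tail, count_tail, count_reverse]
  simp [hhead, hlast]

theorem zip_rotate_one_cons (u : α) (m : List α) :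
    (u :: m).zip ((u :: m).rotate 1) = (u :: m ++ [u]).zip (u :: m ++ [u]).tail := by
  rw [rotate_cons_succ, rotate_zero, tail_append_of_ne_nil (cons_ne_nil u m), tail_cons]
  conv_rhs => rw [← append_nil (m ++ [u]), zip_append (by simp), zip_nil_right, append_nil]

theorem sum_count_mk_left {β : Type*} [DecidableEq α] [DecidableEq β] [Fintype β]
    (L : List (α × β)) (a : α) : ∑ b, L.count (a, b) = (L.map Prod.fst).count a := by
  induction L with
  | nil => simp
  | cons e L ih =>
    obtain ⟨x, y⟩ := e
    by_cases hx : x = a <;> simp [count_cons, Finset.sum_add_distrib, ih, hx]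

theorem sum_count_mk_right {β : Type*} [DecidableEq α] [DecidableEq β] [Fintype α]
    (L : List (α × β)) (b : β) : ∑ a, L.count (a, b) = (L.map Prod.snd).count b := by
  have h := sum_count_mk_left (L.map Prod.swap) b
  rw [map_map, show Prod.fst ∘ Prod.swap = @Prod.snd α β from rfl] at h
  rw [← h]
  exact Finset.sum_congr rfl fun a _ =>
    (count_map_of_injective _ _ Prod.swap_injective (a, b)).symm

end List

section Search

variable {α : Type*}

def HasSimpleCycle (R : α → α → Prop) : Prop :=
  ∃ u m, (u :: m).Nodup ∧ (u :: m ++ [u]).IsChain R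

variable {R : α → α → Prop}

theorem HasSimpleCycle.of_flip (h : HasSimpleCycle (flip R)) : HasSimpleCycle R := by
  obtain ⟨u, m, hnd, hc⟩ := h
  refine ⟨u, m.reverse, by simpa using hnd, ?_⟩
  have : u :: m.reverse ++ [u] = (u :: m ++ [u]).reverse := by simp
  exact this ▸ List.isChain_reverse.2 hc

/-- Walk backwards from `a` along `R`-predecessors, which exist outside `S`: by finiteness the
walk either closes a cycle or reaches `S`. -/
theorem exists_simpleCycle_or_isChain_extension [Fintype α] {S : α → Prop}
    (hpred : ∀ v w, R v w → ¬ S v → ∃ u, R u v) (a : α) (l : List α)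
    (hnd : (a :: l).Nodup) (hc : (a :: l).IsChain R) (ha : ∃ b, R a b) :
    HasSimpleCycle R ∨
      ∃ p, p.Nodup ∧ p.IsChain R ∧ (∃ s ∈ p.head?, S s) ∧ a :: l <:+ p := by
  by_cases hS : S a
  · exact .inr ⟨a :: l, hnd, hc, ⟨a, rfl, hS⟩, List.suffix_refl _⟩
  obtain ⟨b, hab⟩ := ha
  obtain ⟨u, hua⟩ := hpred a b hab hS
  by_cases hu : u ∈ a :: l
  · obtain ⟨m, n, hmn⟩ := List.append_of_mem hu
    have hpre : m ++ [u] <+: a :: l := ⟨n, by simp [hmn]⟩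
    refine .inl ⟨u, m, ?_, ?_⟩
    · exact (List.perm_append_singleton u m).nodup_iff.1 (hnd.sublist hpre.sublist)
    · rw [List.cons_append, List.isChain_cons]
      refine ⟨?_, hc.infix hpre.isInfix⟩
      rcases m with _ | ⟨x, m⟩ <;> simp_all
  · rcases exists_simpleCycle_or_isChain_extension hpred u (a :: l)
        (List.nodup_cons.2 ⟨hu, hnd⟩) (hc.cons (by simpa using hua)) ⟨a, hua⟩
      with h | ⟨p, hnd', hc', hS', hsuf⟩
    · exact .inl h
    · exact .inr ⟨p, hnd', hc', hS', (List.suffix_cons u _).trans hsuf⟩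
termination_by Fintype.card α - l.length
decreasing_by
  have := (List.nodup_cons.2 ⟨hu, hnd⟩).length_le_card
  simp only [List.length_cons] at this ⊢
  omega

end Search

def walkFlow {α : Type*} [DecidableEq α] (ε : ℝ) (p : List α) (e : α × α) : ℝ :=
  ε * (p.zip p.tail).count e

theorem walkFlow_pos_iff {α : Type*} [DecidableEq α] {ε : ℝ} (hε : 0 < ε) {p : List α}
    {e : α × α} : 0 < walkFlow ε p e ↔ e ∈ p.zip p.tail := by
  simp [walkFlow, hε]

namespace IsFlow

variable {N : Network V} {f g : V × V → ℝ}

theorem mem_E (hf : IsFlow N f) {e : V × V} (he : 0 < f e) : e ∈ N.E := by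
  by_contra h
  exact he.ne' (hf.2.2.1 e h)

theorem of_le (hf : IsFlow N f) (hg : ∀ e, 0 ≤ g e) (hgf : ∀ e, g e ≤ f e)
    (hc : ∀ v, v ≠ N.s → v ≠ N.t → ∑ w, g (v, w) = ∑ w, g (w, v)) : IsFlow N g :=
  ⟨hg, fun e => (hgf e).trans (hf.2.1 e),
    fun e he => le_antisymm (hf.2.2.1 e he ▸ hgf e) (hg e), hc⟩

theorem sub (hf : IsFlow N f) (hg : IsFlow N g) (hgf : ∀ e, g e ≤ f e) : IsFlow N (f - g) := by
  refine ⟨fun e => sub_nonneg.2 (hgf e), fun e => ?_, fun e he => ?_, fun v hs ht => ?_⟩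
  · exact (sub_le_self _ (hg.1 e)).trans (hf.2.1 e)
  · simp [hf.2.2.1 e he, hg.2.2.1 e he]
  · simp only [Pi.sub_apply, Finset.sum_sub_distrib, hf.2.2.2 v hs ht, hg.2.2.2 v hs ht]

theorem exists_pos_out (hf : IsFlow N f) {u v : V} (huv : 0 < f (u, v)) (hv : v ≠ N.t) :
    ∃ w, 0 < f (v, w) := by
  have hs : v ≠ N.s := by rintro rfl; exact N.no_into_s u (hf.mem_E huv)
  have hin : 0 < ∑ w, f (w, v) :=
    (Finset.sum_pos_iff_of_nonneg fun w _ => hf.1 _).2 ⟨u, Finset.mem_univ _, huv⟩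
  rw [← hf.2.2.2 v hs hv, Finset.sum_pos_iff_of_nonneg fun w _ => hf.1 _] at hin
  simpa using hin

theorem exists_pos_in (hf : IsFlow N f) {v w : V} (hvw : 0 < f (v, w)) (hv : v ≠ N.s) :
    ∃ u, 0 < f (u, v) := by
  have ht : v ≠ N.t := by rintro rfl; exact N.no_out_t w (hf.mem_E hvw)
  have hout : 0 < ∑ w, f (v, w) :=
    (Finset.sum_pos_iff_of_nonneg fun w _ => hf.1 _).2 ⟨w, Finset.mem_univ _, hvw⟩
  rw [hf.2.2.2 v hv ht, Finset.sum_pos_iff_of_nonneg fun w _ => hf.1 _] at hout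
  simpa using hout

end IsFlow

theorem sum_walkFlow_out (ε : ℝ) (p : List V) (v : V) :
    ∑ w, walkFlow ε p (v, w) = ε * p.dropLast.count v := by
  simp only [walkFlow, ← Finset.mul_sum, ← Nat.cast_sum, List.sum_count_mk_left,
    List.map_fst_zip_tail]

theorem sum_walkFlow_in (ε : ℝ) (p : List V) (v : V) :
    ∑ u, walkFlow ε p (u, v) = ε * p.tail.count v := by
  simp only [walkFlow, ← Finset.mul_sum, ← Nat.cast_sum, List.sum_count_mk_right,
    List.map_snd_zip_tail]

theorem IsFlow.hasSimpleCycle_or_exists_path {N : Network V} {f : V × V → ℝ} (hf : IsFlow N f)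
    {a b : V} (hab : 0 < f (a, b)) :
    HasSimpleCycle (fun u v => 0 < f (u, v)) ∨
      ∃ p : List V, p.Nodup ∧ p.head? = some N.s ∧ p.getLast? = some N.t ∧
        p.IsChain fun u v => 0 < f (u, v) := by
  -- extend the edge forwards to `t` (a backward search for the reversed relation), then
  -- backwards to `s`
  have hba : b ≠ a := by rintro rfl; exact N.no_loops b (hf.mem_E hab)
  rcases exists_simpleCycle_or_isChain_extension (R := flip fun u v => 0 < f (u, v))
      (S := (· = N.t)) (fun v _ hwv ht => hf.exists_pos_out hwv ht) b [a]
      (by simp [hba]) (by simpa [flip] using hab) ⟨a, hab⟩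
    with h | ⟨p, hnd, hc, ⟨_, ht, rfl⟩, hsuf⟩
  · exact .inl h.of_flip
  obtain ⟨r, hr⟩ : ∃ r, p.reverse = a :: b :: r := by
    obtain ⟨r, hr⟩ := List.reverse_prefix.2 hsuf
    exact ⟨r, by simpa using hr.symm⟩
  rcases exists_simpleCycle_or_isChain_extension (S := (· = N.s))
      (fun v _ hvw hs => hf.exists_pos_in hvw hs) a (b :: r)
      (hr ▸ List.nodup_reverse.2 hnd) (hr ▸ List.isChain_reverse.2 hc) ⟨b, hab⟩
    with h | ⟨q, hnd', hc', ⟨_, hs, rfl⟩, l, rfl⟩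
  · exact .inl h
  refine .inr ⟨_, hnd', hs, ?_, hc'⟩
  rw [List.getLast?_append_of_ne_nil _ (List.cons_ne_nil _ _), ← hr, List.getLast?_reverse, ht]

theorem IsFlow.exists_walkFlow_sub {N : Network V} {f : V × V → ℝ} (hf : IsFlow N f)
    {p : List V} (hnd : p.dropLast.Nodup) (hne : p.zip p.tail ≠ [])
    (hpos : ∀ e ∈ p.zip p.tail, 0 < f e)
    (hbal : ∀ v, v ≠ N.s → v ≠ N.t → p.dropLast.count v = p.tail.count v) :
    ∃ ε > 0, IsFlow N (walkFlow ε p) ∧ IsFlow N (f - walkFlow ε p) ∧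
      ∃ e, 0 < f e ∧ walkFlow ε p e = f e := by
  obtain ⟨e₀, he₀, hmin⟩ :=
    (p.zip p.tail).toFinset.exists_min_image f (List.toFinset_nonempty_iff _ |>.2 hne)
  rw [List.mem_toFinset] at he₀
  have hε := hpos e₀ he₀
  have hcount (e) : (p.zip p.tail).count e = if e ∈ p.zip p.tail then 1 else 0 :=
    (List.nodup_zip_tail hnd).count
  have hle (e) : walkFlow (f e₀) p e ≤ f e := by
    rw [walkFlow, hcount]
    split_ifs with he
    · simpa using hmin e (List.mem_toFinset.2 he)
    · simpa using hf.1 e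
  have hg : IsFlow N (walkFlow (f e₀) p) :=
    hf.of_le (fun e => mul_nonneg hε.le (Nat.cast_nonneg _)) hle fun v hs ht => by
      rw [sum_walkFlow_out, sum_walkFlow_in, hbal v hs ht]
  refine ⟨f e₀, hε, hg, hf.sub hg hle, e₀, hε, ?_⟩
  simp [walkFlow, hcount, he₀]

theorem IsFlow.exists_pathFlow_or_cycleFlow_sub {N : Network V} {f : V × V → ℝ}
    (hf : IsFlow N f) {a b : V} (hab : 0 < f (a, b)) :
    ∃ g, (IsPathFlow N g ∨ IsCycleFlow N g) ∧ IsFlow N (f - g) ∧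
      ∃ e, 0 < f e ∧ g e = f e := by
  rcases hf.hasSimpleCycle_or_exists_path hab with ⟨u, m, hnd, hc⟩ | ⟨p, hnd, hs, ht, hc⟩
  · obtain ⟨ε, hε, hg, hfg, hsat⟩ := hf.exists_walkFlow_sub (p := u :: m ++ [u])
      (by rwa [List.dropLast_concat]) (by simp) (List.isChain_iff_forall_mem_zip_tail.1 hc)
      (fun v _ _ => by
        rw [List.dropLast_concat, List.tail_append_of_ne_nil (List.cons_ne_nil _ _),
          List.tail_cons]
        exact ((List.perm_append_singleton u m).count_eq v).symm)
    refine ⟨_, .inr ⟨hg, u :: m, hnd, List.cons_ne_nil _ _, ?_⟩, hfg, hsat⟩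
    ext e
    exact (walkFlow_pos_iff hε).trans (by rw [List.zip_rotate_one_cons]; rfl)
  · have hne : p.zip p.tail ≠ [] := by
      rcases p with _ | ⟨x, _ | ⟨y, p⟩⟩
      · simp at hs
      · simp only [List.head?_cons, List.getLast?_singleton, Option.some.injEq] at hs ht
        exact absurd (hs.symm.trans ht) N.hst
      · simp
    obtain ⟨ε, hε, hg, hfg, hsat⟩ := hf.exists_walkFlow_sub
      (hnd.sublist (List.dropLast_sublist p)) hne (List.isChain_iff_forall_mem_zip_tail.1 hc)
      (fun v hvs hvt => List.count_dropLast_eq_count_tail (by simpa [hs] using hvs.symm)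
        (by simpa [ht] using hvt.symm))
    refine ⟨_, .inl ⟨hg, p, hnd, hs, ht, ?_⟩, hfg, hsat⟩
    ext e
    exact walkFlow_pos_iff hε

noncomputable def posSupport {ι : Type*} [Fintype ι] (f : ι → ℝ) : Finset ι := {i | 0 < f i}

theorem card_posSupport_sub_lt {ι : Type*} [Fintype ι] {f g : ι → ℝ} (hg : ∀ i, 0 ≤ g i)
    {i : ι} (hi : 0 < f i) (hgi : g i = f i) : #(posSupport (f - g)) < #(posSupport f) := by
  refine Finset.card_lt_card ((Finset.ssubset_iff_of_subset fun j hj => ?_).2 ⟨i, ?_, ?_⟩)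
  · simp only [posSupport, Finset.mem_filter, Finset.mem_univ, true_and, Pi.sub_apply] at hj ⊢
    linarith [hg j]
  · simpa [posSupport] using hi
  · simp [posSupport, hgi]

theorem IsFlow.posSupport_subset {N : Network V} {f : V × V → ℝ} (hf : IsFlow N f) :
    posSupport f ⊆ N.E := fun e he =>
  hf.mem_E (by simpa [posSupport] using he)

theorem IsFlow.exists_decomposition {N : Network V} {f : V × V → ℝ} (hf : IsFlow N f) :
    ∃ (k : ℕ) (g : Fin k → V × V → ℝ), k ≤ #(posSupport f) ∧
      (∀ i, IsPathFlow N (g i) ∨ IsCycleFlow N (g i)) ∧ ∀ e, f e = ∑ i, g i e := by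
  by_cases hpos : ∃ e, 0 < f e
  · obtain ⟨⟨a, b⟩, hab⟩ := hpos
    obtain ⟨g, hg, hfg, e₀, he₀, hge₀⟩ := hf.exists_pathFlow_or_cycleFlow_sub hab
    have hlt : #(posSupport (f - g)) < #(posSupport f) :=
      card_posSupport_sub_lt (hg.elim (·.1.1) (·.1.1)) he₀ hge₀
    obtain ⟨k, gs, hk, hgs, hsum⟩ := hfg.exists_decomposition
    refine ⟨k + 1, Fin.cons g gs, by omega, Fin.cases hg hgs, fun e => ?_⟩
    rw [Fin.sum_univ_succ, Fin.cons_zero]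
    simp only [Fin.cons_succ, ← hsum, Pi.sub_apply, add_sub_cancel]
  · simp only [not_exists, not_lt] at hpos
    exact ⟨0, Fin.elim0, Nat.zero_le _, fun i => i.elim0,
      fun e => by simp [le_antisymm (hpos e) (hf.1 e)]⟩
termination_by #(posSupport f)

/-- flow decomposition: every flow on a network with `m` edges
is the sum of at most `m` flows, each of which is an `s`–`t` path-flow or a
cycle-flow. -/
theorem flow_decomposition (N : Network V) (f : V × V → ℝ) (hf : IsFlow N f) :
    ∃ (k : ℕ) (g : Fin k → V × V → ℝ),
      k ≤ N.E.card ∧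
      (∀ i, IsPathFlow N (g i) ∨ IsCycleFlow N (g i)) ∧
      ∀ e, f e = ∑ i, g i e := by
  obtain ⟨k, g, hk, hg, hsum⟩ := hf.exists_decomposition
  exact ⟨k, g, hk.trans (Finset.card_le_card hf.posSupport_subset), hg, hsum⟩
end

section
/- If there exists an augmenting cycle for a flow f on a d-dimensional network (X,T,c), then f is not maximal: the flow f̄ obtained by adding m·c_i to f on each facet X_i of the augmenting cycle (where m is the minimum of c_f(X_i)/c_i) is feasible and has f̄(T) > f(T). -/
open Finset

variable {ι : Type} [LinearOrder ι]

/-- The simplicial boundary of the simplex on the vertex set `F` (with the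
orientation given by listing the vertices in increasing order), as a formal
real linear combination of its codimension-one faces. -/
noncomputable def bdry (F : Finset ι) : Finset ι →₀ ℝ :=
  ∑ v ∈ F, ((-1 : ℝ) ^ ((F.filter (· < v)).card)) • Finsupp.single (F.erase v) 1

/-- A `d`-dimensional network: a pure `d`-dimensional simplicial complex given
by its set of facets `X` (each facet `F` carrying a chosen orientation, its
sign `o F = ±1` relative to the increasing-order orientation), a distinguished
facet `T` (of infinite capacity), and capacities `c` on the facets. -/
structure SNetwork (ι : Type) [LinearOrder ι] (d : ℕ) where
  X : Finset (Finset ι)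
  pure : ∀ F ∈ X, F.card = d + 1
  o : Finset ι → ℝ
  ho : ∀ F ∈ X, o F = 1 ∨ o F = -1
  T : Finset ι
  hT : T ∈ X
  c : Finset ι → ℝ
  hc : ∀ F, 0 ≤ c F

variable {d : ℕ}

/-- A flow on a `d`-dimensional network: a nonnegative function on the facets,
supported on `X`, respecting the capacities (the capacity of `T` being
infinite), and satisfying the weighted-cycle condition `Σ_σ f(σ) ∂σ = 0`. -/
def IsSFlow (N : SNetwork ι d) (f : Finset ι → ℝ) : Prop :=
  (∀ F, 0 ≤ f F) ∧ (∀ F ∈ N.X, F ≠ N.T → f F ≤ N.c F) ∧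
  (∀ F, F ∉ N.X → f F = 0) ∧
  ∑ F ∈ N.X, (f F * N.o F) • bdry F = 0

/-- The residual capacity of an oriented facet: a pair `(F, b)` denotes the
facet `F` with its chosen orientation if `b = true`, and with the opposite
orientation if `b = false`.  Then `c_f(F,+) = c F - f F` and
`c_f(F,−) = f F`. -/
def sResCap (N : SNetwork ι d) (f : Finset ι → ℝ) (x : Finset ι × Bool) : ℝ :=
  if x.2 then N.c x.1 - f x.1 else f x.1

/-- Membership in the residual complex `X_f`: the oriented facet has positive
residual capacity (the capacity of `T` being infinite, `T` with its positive
orientation is always residual). -/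
def SResidual (N : SNetwork ι d) (f : Finset ι → ℝ) (x : Finset ι × Bool) : Prop :=
  if x.2 then (x.1 = N.T ∨ f x.1 < N.c x.1) else 0 < f x.1

lemma bdry_apply_erase (F : Finset ι) {v : ι} (hv : v ∈ F) :
    bdry F (F.erase v) = (-1 : ℝ) ^ ((F.filter (· < v)).card) := by
  unfold bdry
  rw [Finsupp.finset_sum_apply, Finset.sum_eq_single_of_mem v hv]
  · simp
  · intro w hw hwv
    rw [Finsupp.smul_apply, Finsupp.single_apply, if_neg, smul_zero]
    intro h
    have hmem : w ∈ F.erase v := Finset.mem_erase.2 ⟨hwv, hw⟩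
    rw [← h] at hmem
    exact (Finset.mem_erase.1 hmem).1 rfl

lemma bdry_ne_zero {F : Finset ι} (hF : F.Nonempty) : bdry F ≠ 0 := by
  obtain ⟨v, hv⟩ := hF
  intro h
  have h2 := bdry_apply_erase F hv
  rw [h] at h2
  simp only [Finsupp.coe_zero, Pi.zero_apply] at h2
  exact pow_ne_zero _ (by norm_num : (-1:ℝ) ≠ 0) h2.symm

/-- if an augmenting cycle `σ = Σ_i cᵢ Xᵢ` (a `d`-cycle with
positive integer coefficients `a x` supported on oriented facets of the
residual complex `X_f`, containing `T`) exists for a flow `f`, then `f` is not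
maximal: adding `m · cᵢ` to `f` on each facet `Xᵢ` of the cycle, where `m` is
the minimum of `c_f(Xᵢ)/cᵢ`, yields a feasible flow `f̄` with
`f̄(T) > f(T)`. -/
theorem augmenting_cycle_not_maximal (N : SNetwork ι d) (f : Finset ι → ℝ)
    (hf : IsSFlow N f) (a : Finset ι × Bool → ℕ)
    (hsupp : ∀ x, a x ≠ 0 → x.1 ∈ N.X ∧ SResidual N f x)
    (hconsist : ∀ F, a (F, true) = 0 ∨ a (F, false) = 0)
    (hT : a (N.T, true) ≠ 0)
    (hcycle : ∑ F ∈ N.X,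
        (((a (F, true) : ℝ) - (a (F, false) : ℝ)) * N.o F) • bdry F = 0) :
    ∀ m : ℝ,
      m = sInf {r : ℝ | ∃ x : Finset ι × Bool,
            a x ≠ 0 ∧ x ≠ (N.T, true) ∧ r = sResCap N f x / (a x : ℝ)} →
      IsSFlow N (fun F => f F + m * ((a (F, true) : ℝ) - (a (F, false) : ℝ))) ∧
      f N.T < f N.T + m * ((a (N.T, true) : ℝ) - (a (N.T, false) : ℝ)) := by
  intro m hm
  have hTcard := N.pure N.T N.hT
  have hTne : N.T.Nonempty := Finset.card_pos.1 (by omega)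
  have haTf : a (N.T, false) = 0 := (hconsist N.T).resolve_left hT
  set S : Set ℝ := {r : ℝ | ∃ x : Finset ι × Bool,
      a x ≠ 0 ∧ x ≠ (N.T, true) ∧ r = sResCap N f x / (a x : ℝ)} with hS
  have hfin : S.Finite := by
    apply Set.Finite.subset (Set.Finite.image (fun x => sResCap N f x / (a x : ℝ))
      (Set.Finite.prod N.X.finite_toSet (Set.finite_univ (α := Bool))))
    rintro r ⟨x, hx, -, rfl⟩
    exact ⟨x, ⟨(hsupp x hx).1, trivial⟩, rfl⟩
  have hne : S.Nonempty := by
    by_contra hemp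
    rw [Set.not_nonempty_iff_eq_empty] at hemp
    have hall : ∀ x, a x ≠ 0 → x = (N.T, true) := by
      intro x hx
      by_contra hxt
      have hmem : (sResCap N f x / (a x : ℝ)) ∈ S := ⟨x, hx, hxt, rfl⟩
      rw [hemp] at hmem
      exact hmem
    rw [Finset.sum_eq_single_of_mem N.T N.hT] at hcycle
    · have hcoef : ((a (N.T, true) : ℝ) - (a (N.T, false) : ℝ)) * N.o N.T ≠ 0 := by
        rw [haTf]
        have h1 : (1:ℝ) ≤ (a (N.T, true) : ℝ) := Nat.one_le_cast.2 (Nat.pos_of_ne_zero hT)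
        rcases N.ho N.T N.hT with h | h <;> rw [h] <;> intro hc <;> push_cast at hc <;> nlinarith
      exact bdry_ne_zero hTne ((smul_eq_zero.1 hcycle).resolve_left hcoef)
    · intro F _ hFT
      have ht : a (F, true) = 0 := by
        by_contra h
        have h2 := hall _ h
        rw [Prod.mk.injEq] at h2
        exact hFT h2.1
      have hfa : a (F, false) = 0 := by
        by_contra h
        exact absurd (congrArg Prod.snd (hall _ h)) (by simp)
      rw [ht, hfa]
      simp
  have hpos : ∀ r ∈ S, 0 < r := by
    rintro r ⟨⟨F, b⟩, hx, hxt, rfl⟩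
    have hax : (0:ℝ) < (a (F, b) : ℝ) := Nat.cast_pos.2 (Nat.pos_of_ne_zero hx)
    apply div_pos _ hax
    have hres := (hsupp _ hx).2
    cases b with
    | false => simpa [sResCap, SResidual] using hres
    | true =>
      simp only [SResidual, if_pos] at hres
      have hFT : F ≠ N.T := fun h => hxt (by rw [h])
      simp only [sResCap]
      have : f F < N.c F := hres.resolve_left hFT
      simp only [if_pos]
      linarith
  have hmS : m ∈ S := hm ▸ hne.csInf_mem hfin
  have hm0 : 0 < m := hpos m hmS
  have hmle : ∀ x, a x ≠ 0 → x ≠ (N.T, true) → m * (a x : ℝ) ≤ sResCap N f x := by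
    intro x hx hxt
    have hle : m ≤ sResCap N f x / (a x : ℝ) := hm ▸ csInf_le hfin.bddBelow ⟨x, hx, hxt, rfl⟩
    have hax : (0:ℝ) < (a x : ℝ) := Nat.cast_pos.2 (Nat.pos_of_ne_zero hx)
    rw [le_div_iff₀ hax] at hle
    linarith
  obtain ⟨hf0, hfc, hfs, hfcyc⟩ := hf
  refine ⟨⟨?_, ?_, ?_, ?_⟩, ?_⟩
  · intro F
    dsimp only
    rcases eq_or_ne (a (F, false)) 0 with h0 | h0
    · have h1 : (0:ℝ) ≤ (a (F, true) : ℝ) := Nat.cast_nonneg _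
      have := hf0 F
      rw [h0]
      push_cast
      nlinarith
    · have ht0 : a (F, true) = 0 := (hconsist F).resolve_right h0
      have hle := hmle (F, false) h0 (by simp)
      simp only [sResCap] at hle
      have := hf0 F
      rw [ht0]
      push_cast
      simp only [if_neg (by simp : ¬ (false = true))] at hle
      linarith
  · intro F hFX hFT
    dsimp only
    rcases eq_or_ne (a (F, true)) 0 with h0 | h0
    · have h1 : (0:ℝ) ≤ (a (F, false) : ℝ) := Nat.cast_nonneg _
      have := hfc F hFX hFT
      rw [h0]
      push_cast
      nlinarith
    · have hfa : a (F, false) = 0 := (hconsist F).resolve_left h0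
      have hle := hmle (F, true) h0 (by simp [Prod.ext_iff, hFT])
      simp only [sResCap, if_pos] at hle
      rw [hfa]
      push_cast
      linarith
  · intro F hFX
    dsimp only
    have ht : a (F, true) = 0 := by
      by_contra h; exact hFX (hsupp _ h).1
    have hfa : a (F, false) = 0 := by
      by_contra h; exact hFX (hsupp _ h).1
    rw [hfs F hFX, ht, hfa]
    simp
  · have key : ∀ F, ((f F + m * ((a (F, true) : ℝ) - (a (F, false) : ℝ))) * N.o F) • bdry F
        = (f F * N.o F) • bdry F
          + m • ((((a (F, true) : ℝ) - (a (F, false) : ℝ)) * N.o F) • bdry F) := by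
      intro F
      rw [smul_smul, ← add_smul]
      congr 1
      ring
    simp only [key]
    rw [Finset.sum_add_distrib, hfcyc, ← Finset.smul_sum, hcycle, smul_zero, add_zero]
  · rw [haTf]
    have h1 : (1:ℝ) ≤ (a (N.T, true) : ℝ) := Nat.one_le_cast.2 (Nat.pos_of_ne_zero hT)
    push_cast
    nlinarith
end
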